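/- arXiv:1801.04614 — 3 statements merged into one kernel-verified Lean document; each statement's English description precedes it below -/
import Mathlib

section
/- Let a and b be coprime odd integers, let β ≥ 2 be an integer, and let c and d be odd positive integers. Then there exists a positive integer k such that 2^β·c·d divides a^k + b^k if and only if there exists a positive integer k₁ such that 2^β·c divides a^{k₁} + b^{k₁} and there exists a positive integer k₂ such that 2^β·d divides a^{k₂} + b^{k₂}. -/
/-!
Since `4 ∣ 2 ^ β` and `a ^ k + b ^ k ≡ 2 [ZMOD 4]` for even `k`, the exponents `k₁, k₂`
witnessing goodness of `c` and `d` are odd. Then `a ^ (k₁ k₂) + b ^ (k₁ k₂)` is divisible by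
both `2 ^ β c` and `2 ^ β d`, and raising it to the odd power `c` gains one more factor `c`:
if `m` is odd and `m ∣ x + y`, then `(x + y) m ∣ x ^ m + y ^ m`, because the cofactor
`(x ^ m + y ^ m) / (x + y)` is congruent to `m x ^ (m - 1)` modulo `x + y`.
-/

theorem Odd.add_mul_dvd_pow_add_pow {R : Type*} [CommRing R] {x y : R} {m : ℕ} (hm : Odd m)
    (h : (m : R) ∣ x + y) : (x + y) * m ∣ x ^ m + y ^ m := by
  have hgeom := geom_sum₂_mul x (-y) m
  rw [hm.neg_pow, sub_neg_eq_add, sub_neg_eq_add] at hgeom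
  rw [← hgeom, mul_comm _ (x + y)]
  exact mul_dvd_mul_left _ (dvd_geom_sum₂_self (y := -y) (by rwa [sub_neg_eq_add]))

theorem Int.odd_of_four_dvd_pow_add_pow {a b : ℤ} (ha : Odd a) (hb : Odd b) {k : ℕ}
    (h : 4 ∣ a ^ k + b ^ k) : Odd k := by
  obtain ⟨m, rfl⟩ | hk := k.even_or_odd
  · have ha₂ := Int.sq_mod_four_eq_one_of_odd (ha.pow (n := m))
    have hb₂ := Int.sq_mod_four_eq_one_of_odd (hb.pow (n := m))
    rw [← two_mul, pow_mul', pow_mul'] at h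
    omega
  · exact hk

theorem mul_dvd_pow_add_pow_of_odd {R : Type*} [CommRing R] {a b e : R} {c k₁ k₂ : ℕ}
    (hc : Odd c) (hk₁ : Odd k₁) (hk₂ : Odd k₂)
    (h₁ : (c : R) ∣ a ^ k₁ + b ^ k₁) (h₂ : e ∣ a ^ k₂ + b ^ k₂) :
    e * c ∣ a ^ (k₁ * k₂ * c) + b ^ (k₁ * k₂ * c) := by
  have hdvd₁ : a ^ k₁ + b ^ k₁ ∣ a ^ (k₁ * k₂) + b ^ (k₁ * k₂) := by
    simpa only [pow_mul] using Odd.add_dvd_pow_add_pow (a ^ k₁) (b ^ k₁) hk₂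
  have hdvd₂ : a ^ k₂ + b ^ k₂ ∣ a ^ (k₁ * k₂) + b ^ (k₁ * k₂) := by
    simpa only [pow_mul, mul_comm k₁] using Odd.add_dvd_pow_add_pow (a ^ k₂) (b ^ k₂) hk₁
  have hpow := hc.add_mul_dvd_pow_add_pow (h₁.trans hdvd₁)
  rw [← pow_mul, ← pow_mul] at hpow
  exact (mul_dvd_mul_right (h₂.trans hdvd₂) _).trans hpow

theorem mul_good_iff_good_and_good_general
    (a b : ℤ) (ha : Odd a) (hb : Odd b)
    (β : ℕ) (hβ : 2 ≤ β) (c d : ℕ)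
    (hoc : Odd c) :
    (∃ k : ℕ, 0 < k ∧ ((2 ^ β * (c * d) : ℕ) : ℤ) ∣ a ^ k + b ^ k) ↔
      ((∃ k₁ : ℕ, 0 < k₁ ∧ ((2 ^ β * c : ℕ) : ℤ) ∣ a ^ k₁ + b ^ k₁) ∧
        (∃ k₂ : ℕ, 0 < k₂ ∧ ((2 ^ β * d : ℕ) : ℤ) ∣ a ^ k₂ + b ^ k₂)) := by
  have four_dvd (e : ℕ) : (4 : ℤ) ∣ ((2 ^ β * e : ℕ) : ℤ) := by
    have : 2 ^ 2 ∣ 2 ^ β * e := (pow_dvd_pow 2 hβ).mul_right e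
    exact_mod_cast this
  constructor
  · rintro ⟨k, hk, h⟩
    refine ⟨⟨k, hk, (Int.natCast_dvd_natCast.mpr ?_).trans h⟩,
      ⟨k, hk, (Int.natCast_dvd_natCast.mpr ?_).trans h⟩⟩
    · exact mul_dvd_mul_left _ (dvd_mul_right c d)
    · exact mul_dvd_mul_left _ (dvd_mul_left d c)
  · rintro ⟨⟨k₁, -, h₁⟩, ⟨k₂, -, h₂⟩⟩
    have hk₁ := Int.odd_of_four_dvd_pow_add_pow ha hb ((four_dvd c).trans h₁)
    have hk₂ := Int.odd_of_four_dvd_pow_add_pow ha hb ((four_dvd d).trans h₂)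
    have hc₁ : (c : ℤ) ∣ a ^ k₁ + b ^ k₁ :=
      (Int.natCast_dvd_natCast.mpr (dvd_mul_left c _)).trans h₁
    refine ⟨k₁ * k₂ * c, (hk₁.mul hk₂ |>.mul hoc).pos, ?_⟩
    have hcd : 2 ^ β * (c * d) = 2 ^ β * d * c := by ring
    rw [hcd, Nat.cast_mul]
    exact mul_dvd_pow_add_pow_of_odd hoc hk₁ hk₂ hc₁ h₂

/-- Let `a` and `b` be coprime odd integers, `β ≥ 2`, and `c`, `d` odd positive integers.
Then `cd` is `2^β`-good if and only if both `c` and `d` are `2^β`-good. -/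
theorem mul_good_iff_good_and_good
    (a b : ℤ) (ha : Odd a) (hb : Odd b) (hco : IsCoprime a b)
    (β : ℕ) (hβ : 2 ≤ β) (c d : ℕ) (hc : 0 < c) (hd : 0 < d)
    (hoc : Odd c) (hod : Odd d) :
    (∃ k : ℕ, 0 < k ∧ ((2 ^ β * (c * d) : ℕ) : ℤ) ∣ a ^ k + b ^ k) ↔
      ((∃ k₁ : ℕ, 0 < k₁ ∧ ((2 ^ β * c : ℕ) : ℤ) ∣ a ^ k₁ + b ^ k₁) ∧
        (∃ k₂ : ℕ, 0 < k₂ ∧ ((2 ^ β * d : ℕ) : ℤ) ∣ a ^ k₂ + b ^ k₂)) :=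
  mul_good_iff_good_and_good_general a b ha hb β hβ c d hoc
end

section
/- Let a and b be coprime odd integers with a + b ≠ 0. Then a positive integer d is 2^1-evenly-good (i.e., 2d divides a^k + b^k for some even integer k ≥ 2) if and only if d is odd and either d = 1 or there exists an integer s ≥ 2 such that for every prime p dividing d, 2^s exactly divides the multiplicative order of a·b^{-1} modulo p (2^s divides it and 2^{s+1} does not). -/
/-!
For a prime `p ∤ b`, `p ∣ a^k + b^k` exactly when `(a/b)^k = -1` in `𝔽_p`, i.e. when the order
`n` of `a/b` divides `2k` but not `k`; writing `n = 2^t m` and `k = 2^u c` with `m, c` odd, this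
says `t = u + 1` and `m ∣ c`. Hence all primes of a `2`-evenly-good `d` share the exponent
`s = v₂(k) + 1 ≥ 2`, and `d` is odd because `a^k + b^k ≡ 2 mod 4` for even `k`.
Conversely, if they share `s`, then `j = 2^(s-1) · ∏ m_p` makes every `p ∣ d` divide
`a^j + b^j`, and the odd power `d` lifts this to `d ∣ a^(jd) + b^(jd)`, because
`p ∣ x + y` implies `p (x + y) ∣ x^p + y^p` for odd `p`.
-/

namespace Nat

theorem two_pow_mul_dvd_two_pow_mul_iff {t u m n : ℕ} (hm : Odd m) (hn : Odd n) :
    2 ^ t * m ∣ 2 ^ u * n ↔ t ≤ u ∧ m ∣ n := by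
  refine ⟨fun h => ⟨?_, ?_⟩, fun ⟨htu, hmn⟩ => mul_dvd_mul (pow_dvd_pow 2 htu) hmn⟩
  · have : 2 ^ t ∣ 2 ^ u :=
      (hn.coprime_two_left.pow_left t).dvd_of_dvd_mul_right (dvd_of_mul_right_dvd h)
    exact (pow_dvd_pow_iff_le_right (by norm_num)).mp this
  · exact (hm.coprime_two_right.pow_right u).dvd_of_dvd_mul_left (dvd_of_mul_left_dvd h)

theorem two_pow_dvd_and_not_dvd_iff {s t m : ℕ} (hm : Odd m) :
    2 ^ s ∣ 2 ^ t * m ∧ ¬ 2 ^ (s + 1) ∣ 2 ^ t * m ↔ s = t := by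
  have key (r : ℕ) : 2 ^ r ∣ 2 ^ t * m ↔ r ≤ t := by
    simpa using two_pow_mul_dvd_two_pow_mul_iff (t := r) (u := t) odd_one hm
  rw [key, key]
  omega

theorem two_pow_mul_dvd_two_mul_and_not_dvd_iff {t u m n : ℕ} (hm : Odd m) (hn : Odd n) :
    2 ^ t * m ∣ 2 * (2 ^ u * n) ∧ ¬ 2 ^ t * m ∣ 2 ^ u * n ↔ t = u + 1 ∧ m ∣ n := by
  rw [← mul_assoc, ← pow_succ', two_pow_mul_dvd_two_pow_mul_iff hm hn,
    two_pow_mul_dvd_two_pow_mul_iff hm hn]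
  by_cases hmn : m ∣ n <;> simp [hmn]
  omega

theorem two_pow_dvd_and_not_dvd_of_dvd_two_mul {n u c : ℕ} (hc : Odd c)
    (h : n ∣ 2 * (2 ^ u * c) ∧ ¬ n ∣ 2 ^ u * c) : 2 ^ (u + 1) ∣ n ∧ ¬ 2 ^ (u + 1 + 1) ∣ n := by
  have hn : n ≠ 0 := by
    rintro rfl
    simp [hc.pos.ne'] at h
  obtain ⟨t, m, hm, rfl⟩ := exists_eq_two_pow_mul_odd hn
  rw [two_pow_dvd_and_not_dvd_iff hm]
  exact ((two_pow_mul_dvd_two_mul_and_not_dvd_iff hm hc).mp h).1.symm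

theorem exists_dvd_two_mul_and_not_dvd {ι : Type*} (S : Finset ι) (n : ι → ℕ) {s : ℕ}
    (hs : 1 ≤ s) (h : ∀ i ∈ S, 2 ^ s ∣ n i ∧ ¬ 2 ^ (s + 1) ∣ n i) :
    ∃ j ≠ 0, 2 ^ (s - 1) ∣ j ∧ ∀ i ∈ S, n i ∣ 2 * j ∧ ¬ n i ∣ j := by
  have hsplit : ∀ i ∈ S, Odd (n i / 2 ^ s) ∧ n i = 2 ^ s * (n i / 2 ^ s) := by
    intro i hi
    obtain ⟨hdvd, hndvd⟩ := h i hi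
    have heq := (Nat.mul_div_cancel' hdvd).symm
    refine ⟨not_even_iff_odd.mp fun ⟨r, hr⟩ => hndvd ⟨r, ?_⟩, heq⟩
    rw [heq, hr, pow_succ]
    ring
  set M := ∏ i ∈ S, n i / 2 ^ s
  have hM : Odd M :=
    Finset.prod_induction _ Odd (fun _ _ => Odd.mul) odd_one fun i hi => (hsplit i hi).1
  refine ⟨2 ^ (s - 1) * M, mul_ne_zero (by positivity) hM.pos.ne', dvd_mul_right _ _,
    fun i hi => ?_⟩
  rw [(hsplit i hi).2, two_pow_mul_dvd_two_mul_and_not_dvd_iff (hsplit i hi).1 hM]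
  exact ⟨by omega, Finset.dvd_prod_of_mem _ hi⟩

end Nat

theorem pow_eq_neg_one_iff_orderOf_dvd {R : Type*} [Ring R] [NoZeroDivisors R]
    (h : (-1 : R) ≠ 1) {x : R} {k : ℕ} :
    x ^ k = -1 ↔ orderOf x ∣ 2 * k ∧ ¬ orderOf x ∣ k := by
  rw [orderOf_dvd_iff_pow_eq_one, orderOf_dvd_iff_pow_eq_one, pow_mul', sq_eq_one_iff]
  constructor
  · intro hk
    exact ⟨Or.inr hk, hk ▸ h⟩
  · rintro ⟨h1 | h1, h2⟩
    exacts [absurd h1 h2, h1]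

theorem pow_add_pow_eq_zero_iff_mul_inv_pow_eq_neg_one {F : Type*} [Field F] {a b : F}
    (hb : b ≠ 0) (k : ℕ) : a ^ k + b ^ k = 0 ↔ (a * b⁻¹) ^ k = -1 := by
  rw [mul_pow, inv_pow, mul_inv_eq_iff_eq_mul₀ (pow_ne_zero k hb), neg_one_mul,
    add_eq_zero_iff_eq_neg]

theorem mul_add_dvd_pow_add_pow {R : Type*} [CommRing R] {p : ℕ} (hp : Odd p) {x y : R}
    (h : (p : R) ∣ x + y) : (p : R) * (x + y) ∣ x ^ p + y ^ p := by
  have h' : (p : R) ∣ x - -y := by rwa [sub_neg_eq_add]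
  have := mul_dvd_mul (dvd_geom_sum₂_self h') (dvd_refl (x - -y))
  rwa [geom_sum₂_mul, hp.neg_pow, sub_neg_eq_add, sub_neg_eq_add] at this

namespace Int

theorem not_four_dvd_pow_add_pow {a b : ℤ} (ha : Odd a) (hb : Odd b) {k : ℕ} (hk : Even k) :
    ¬ (4 : ℤ) ∣ a ^ k + b ^ k := by
  obtain ⟨t, rfl⟩ := hk
  have hpow (x : ℤ) (hx : Odd x) : x ^ (t + t) ≡ 1 [ZMOD 4] := by
    rw [← two_mul, pow_mul]
    simpa using (show x ^ 2 ≡ 1 [ZMOD 4] from sq_mod_four_eq_one_of_odd hx).pow t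
  have h2 : (a ^ (t + t) + b ^ (t + t)) % 4 = 2 := (hpow a ha).add (hpow b hb)
  omega

theorem natCast_dvd_pow_add_pow_self {x y : ℤ} {d : ℕ} (hd : Odd d)
    (h : ∀ p : ℕ, p.Prime → p ∣ d → (p : ℤ) ∣ x + y) : (d : ℤ) ∣ x ^ d + y ^ d := by
  induction d using induction_on_primes with
  | zero => exact absurd hd (by decide)
  | one => simp
  | prime_mul p n hp ih =>
    obtain ⟨hpodd, hnodd⟩ := Nat.odd_mul.mp hd
    have hn : (n : ℤ) ∣ x ^ n + y ^ n :=
      ih hnodd fun q hq hqn => h q hq (hqn.mul_left p)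
    have hp' : (p : ℤ) ∣ x ^ n + y ^ n :=
      (h p hp (dvd_mul_right p n)).trans (hnodd.add_dvd_pow_add_pow x y)
    rw [pow_mul', pow_mul', Nat.cast_mul]
    exact (mul_dvd_mul_left (p : ℤ) hn).trans (mul_add_dvd_pow_add_pow hpodd hp')

theorem not_dvd_right_of_dvd_pow_add_pow {p a b : ℤ} (hp : Prime p) (hco : IsCoprime a b)
    {k : ℕ} (hk : k ≠ 0) (h : p ∣ a ^ k + b ^ k) : ¬ p ∣ b := fun hpb =>
  hp.not_isUnit <| hco.isUnit_of_dvd' (hp.dvd_of_dvd_pow ((dvd_add_left (dvd_pow hpb hk)).mp h)) hpb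

theorem prime_dvd_pow_add_pow_iff {p : ℕ} [Fact p.Prime] (hp : p ≠ 2) {a b : ℤ}
    (hb : ¬ (p : ℤ) ∣ b) {k : ℕ} :
    (p : ℤ) ∣ a ^ k + b ^ k ↔
      orderOf ((a : ZMod p) * (b : ZMod p)⁻¹) ∣ 2 * k ∧
        ¬ orderOf ((a : ZMod p) * (b : ZMod p)⁻¹) ∣ k := by
  have hb' : (b : ZMod p) ≠ 0 := by rwa [Ne, ZMod.intCast_zmod_eq_zero_iff_dvd]
  have : Fact (2 < p) := ⟨(Fact.out : p.Prime).two_le.lt_of_ne' hp⟩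
  rw [← ZMod.intCast_zmod_eq_zero_iff_dvd, Int.cast_add, Int.cast_pow, Int.cast_pow,
    pow_add_pow_eq_zero_iff_mul_inv_pow_eq_neg_one hb',
    pow_eq_neg_one_iff_orderOf_dvd ZMod.neg_one_ne_one]

end Int

theorem exists_two_pow_exact_orderOf_of_dvd_pow_add_pow {a b : ℤ} (hco : IsCoprime a b)
    {d k : ℕ} (hd : Odd d) (hk : Even k) (hk0 : k ≠ 0) (h : (d : ℤ) ∣ a ^ k + b ^ k) :
    ∃ s : ℕ, 2 ≤ s ∧ ∀ p : ℕ, p.Prime → p ∣ d →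
      2 ^ s ∣ orderOf ((a : ZMod p) * (b : ZMod p)⁻¹) ∧
        ¬ 2 ^ (s + 1) ∣ orderOf ((a : ZMod p) * (b : ZMod p)⁻¹) := by
  obtain ⟨u, c, hc, rfl⟩ := Nat.exists_eq_two_pow_mul_odd hk0
  have hu : 1 ≤ u :=
    ((Nat.two_pow_mul_dvd_two_pow_mul_iff odd_one hc).mp (by simpa using hk.two_dvd)).1
  refine ⟨u + 1, by omega, fun p hp hpd => ?_⟩
  have : Fact p.Prime := ⟨hp⟩
  have hpk : (p : ℤ) ∣ a ^ (2 ^ u * c) + b ^ (2 ^ u * c) :=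
    (Int.natCast_dvd_natCast.mpr hpd).trans h
  have hpb := Int.not_dvd_right_of_dvd_pow_add_pow (Nat.prime_iff_prime_int.mp hp) hco hk0 hpk
  exact Nat.two_pow_dvd_and_not_dvd_of_dvd_two_mul hc
    ((Int.prime_dvd_pow_add_pow_iff (hd.ne_two_of_dvd_nat hpd) hpb).mp hpk)

theorem exists_even_two_mul_dvd_pow_add_pow_of_two_pow_exact_orderOf {a b : ℤ} (ha : Odd a)
    (hb : Odd b) {d s : ℕ} (hd : Odd d) (hs : 2 ≤ s)
    (hord : ∀ p : ℕ, p.Prime → p ∣ d →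
      2 ^ s ∣ orderOf ((a : ZMod p) * (b : ZMod p)⁻¹) ∧
        ¬ 2 ^ (s + 1) ∣ orderOf ((a : ZMod p) * (b : ZMod p)⁻¹)) :
    ∃ k : ℕ, 2 ≤ k ∧ Even k ∧ ((2 * d : ℕ) : ℤ) ∣ a ^ k + b ^ k := by
  obtain ⟨j, hj0, hj2, hj⟩ := Nat.exists_dvd_two_mul_and_not_dvd d.primeFactors
    (fun p => orderOf ((a : ZMod p) * (b : ZMod p)⁻¹)) (by omega)
    fun p hp => hord p (Nat.prime_of_mem_primeFactors hp) (Nat.dvd_of_mem_primeFactors hp)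
  have hpj (p : ℕ) (hp : p.Prime) (hpd : p ∣ d) : (p : ℤ) ∣ a ^ j + b ^ j := by
    have : Fact p.Prime := ⟨hp⟩
    have hpb : ¬ (p : ℤ) ∣ b := by
      rw [← ZMod.intCast_zmod_eq_zero_iff_dvd]
      intro hb0
      simpa [hb0, orderOf_zero] using (hord p hp hpd).2
    exact (Int.prime_dvd_pow_add_pow_iff (hd.ne_two_of_dvd_nat hpd) hpb).mpr
      (hj p (Nat.mem_primeFactors.mpr ⟨hp, hpd, hd.pos.ne'⟩))
  have hjd : Even (j * d) :=
    even_iff_two_dvd.mpr (((dvd_pow_self 2 (by omega)).trans hj2).mul_right d)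
  refine ⟨j * d, ?_, hjd, ?_⟩
  · obtain ⟨r, hr⟩ := hjd
    have := mul_ne_zero hj0 hd.pos.ne'
    omega
  · rw [pow_mul, pow_mul]
    push_cast
    exact (Nat.isCoprime_iff_coprime.mpr (Nat.coprime_two_left.mpr hd)).mul_dvd
      (even_iff_two_dvd.mp (ha.pow.pow.add_odd hb.pow.pow))
      (Int.natCast_dvd_pow_add_pow_self hd hpj)

theorem two_evenly_good_iff_general
    (a b : ℤ) (ha : Odd a) (hb : Odd b) (hco : IsCoprime a b)
    (d : ℕ) :
    (∃ k : ℕ, 2 ≤ k ∧ Even k ∧ ((2 * d : ℕ) : ℤ) ∣ a ^ k + b ^ k) ↔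
      (Odd d ∧ (d = 1 ∨
        ∃ s : ℕ, 2 ≤ s ∧ ∀ p : ℕ, p.Prime → p ∣ d →
          2 ^ s ∣ orderOf ((a : ZMod p) * (b : ZMod p)⁻¹) ∧
            ¬ 2 ^ (s + 1) ∣ orderOf ((a : ZMod p) * (b : ZMod p)⁻¹))) := by
  constructor
  · rintro ⟨k, hk2, hk, hdvd⟩
    have hd : Odd d := by
      rw [← Nat.not_even_iff_odd]
      rintro ⟨e, rfl⟩
      exact Int.not_four_dvd_pow_add_pow ha hb hk (dvd_trans ⟨e, by push_cast; ring⟩ hdvd)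
    have hdvd' : (d : ℤ) ∣ a ^ k + b ^ k :=
      (Int.natCast_dvd_natCast.mpr (dvd_mul_left d 2)).trans hdvd
    exact ⟨hd, Or.inr (exists_two_pow_exact_orderOf_of_dvd_pow_add_pow hco hd hk (by omega) hdvd')⟩
  · rintro ⟨hd, rfl | ⟨s, hs, hord⟩⟩
    · exact ⟨2, le_rfl, even_two, by simpa using (ha.pow.add_odd hb.pow).two_dvd⟩
    · exact exists_even_two_mul_dvd_pow_add_pow_of_two_pow_exact_orderOf ha hb hd hs hord

/-- Let `a` and `b` be coprime odd integers with `a + b ≠ 0`. A positive integer `d` is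
`2`-evenly-good if and only if `d` is odd and either `d = 1` or there exists `s ≥ 2`
such that for every prime `p ∣ d` the order of `a·b⁻¹` modulo `p` is exactly divisible
by `2^s`. -/
theorem two_evenly_good_iff
    (a b : ℤ) (ha : Odd a) (hb : Odd b) (hco : IsCoprime a b) (hab : a + b ≠ 0)
    (d : ℕ) (hd : 0 < d) :
    (∃ k : ℕ, 2 ≤ k ∧ Even k ∧ ((2 * d : ℕ) : ℤ) ∣ a ^ k + b ^ k) ↔
      (Odd d ∧ (d = 1 ∨
        ∃ s : ℕ, 2 ≤ s ∧ ∀ p : ℕ, p.Prime → p ∣ d →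
          2 ^ s ∣ orderOf ((a : ZMod p) * (b : ZMod p)⁻¹) ∧
            ¬ 2 ^ (s + 1) ∣ orderOf ((a : ZMod p) * (b : ZMod p)⁻¹))) :=
  two_evenly_good_iff_general a b ha hb hco d
end

section
/- Let p be an odd prime, let ν ≥ 1 and l ≥ 1 be integers, and let α be an integer with 0 ≤ α < 2^{ν-1} such that p ≡ 5^α (mod 2^{ν+1}) or p ≡ -5^α (mod 2^{ν+1}) (for ν = 1 this forces α = 0). Assume that 2^{ν+1} does not divide p^l + 1. Then φ(2^{ν+1}) = 2 · ord_{2^{ν+1}}(p^l) · gcd(2^{ν-1}, α·l), where φ is Euler's totient function and ord_{2^{ν+1}}(p^l) is the multiplicative order of p^l modulo 2^{ν+1}. Equivalently, the quantity t(2^{ν+1}, p^l) = φ(2^{ν+1})/(2·ord_{2^{ν+1}}(p^l)) equals gcd(2^{ν-1}, α·l). -/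
lemma five_pow_two_pow (j : ℕ) : ∃ u : ℕ, Odd u ∧ 5 ^ 2 ^ j = 1 + 2 ^ (j + 2) * u := by
  induction j with
  | zero => exact ⟨1, odd_one, by norm_num⟩
  | succ n ih =>
    obtain ⟨u, hu, h⟩ := ih
    refine ⟨u + 2 ^ (n + 1) * u ^ 2, ?_, ?_⟩
    · rcases hu with ⟨k, hk⟩
      exact ⟨k + 2 ^ n * u ^ 2, by subst hk; ring⟩
    · have h2 : (5:ℕ) ^ 2 ^ (n + 1) = (5 ^ 2 ^ n) ^ 2 := by
        rw [← pow_mul, pow_succ]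
      rw [h2, h]; ring

lemma orderOf_five (ν : ℕ) (hν : 1 ≤ ν) :
    orderOf (5 : ZMod (2 ^ (ν + 1))) = 2 ^ (ν - 1) := by
  obtain ⟨n, rfl⟩ : ∃ n, ν = n + 1 := ⟨ν - 1, by omega⟩
  rcases n with _ | m
  · simpa using orderOf_eq_one_iff.mpr (by decide : (5 : ZMod (2 ^ 2)) = 1)
  · have key : ∀ j : ℕ, (5 : ZMod (2 ^ (m + 3))) ^ 2 ^ j =
        1 + (2 : ZMod (2 ^ (m + 3))) ^ (j + 2) *
          ((five_pow_two_pow j).choose : ZMod (2 ^ (m + 3))) := by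
      intro j
      obtain ⟨hu, h⟩ := (five_pow_two_pow j).choose_spec
      have h' := congrArg (fun k : ℕ => (k : ZMod (2 ^ (m + 3)))) h
      push_cast at h'
      simpa using h'
    have hfin : (5 : ZMod (2 ^ (m + 3))) ^ 2 ^ (m + 1) = 1 := by
      rw [key (m + 1)]
      have h0 : ((2 ^ (m + 3) : ℕ) : ZMod (2 ^ (m + 3))) = 0 := ZMod.natCast_self _
      push_cast at h0
      rw [h0]; ring
    have hnot : ¬ (5 : ZMod (2 ^ (m + 3))) ^ 2 ^ m = 1 := by
      intro h
      obtain ⟨hu, heq⟩ := (five_pow_two_pow m).choose_spec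
      set u := (five_pow_two_pow m).choose with hudef
      rw [key m] at h
      have h2 : ((2 ^ (m + 2) * u : ℕ) : ZMod (2 ^ (m + 3))) = 0 := by
        push_cast
        linear_combination h
      rw [ZMod.natCast_eq_zero_iff] at h2
      have hdvd : (2:ℕ) ^ (m + 2) * 2 ∣ 2 ^ (m + 2) * u := by
        rw [← pow_succ]; exact h2
      have h2u : 2 ∣ u := (mul_dvd_mul_iff_left (by positivity : (2:ℕ) ^ (m + 2) ≠ 0)).mp hdvd
      exact (Nat.not_even_iff_odd.mpr hu) (even_iff_two_dvd.mpr h2u)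
    have := orderOf_eq_prime_pow (x := (5 : ZMod (2 ^ (m + 3)))) (p := 2) (n := m) hnot hfin
    simpa using this

lemma five_pow_ne_neg_one (ν : ℕ) (hν : 1 ≤ ν) (i : ℕ) :
    (5 : ZMod (2 ^ (ν + 1))) ^ i ≠ -1 := by
  intro h
  have h4 : (4:ℕ) ∣ 2 ^ (ν + 1) := by
    have h' : (2:ℕ) ^ 2 ∣ 2 ^ (ν + 1) := pow_dvd_pow 2 (by omega)
    simpa using h'
  have hmap := congrArg (ZMod.castHom h4 (ZMod 4)) h
  simp only [map_pow, map_neg, map_one, map_ofNat] at hmap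
  have h51 : (5 : ZMod 4) = 1 := by decide
  rw [h51, one_pow] at hmap
  exact absurd hmap (by decide)

/-- Let `p` be an odd prime, `ν ≥ 1`, `l ≥ 1`, and `α < 2^(ν-1)` with
`p ≡ ±5^α (mod 2^(ν+1))`. If `2^(ν+1) ∤ p^l + 1` then
`φ(2^(ν+1)) = 2 · ord_{2^(ν+1)}(p^l) · gcd(2^(ν-1), α·l)`, i.e. the exponent
`t(2^(ν+1), p^l) = φ(2^(ν+1))/(2 ord_{2^(ν+1)}(p^l))` equals `gcd(2^(ν-1), α·l)`. -/
theorem totient_eq_two_mul_order_mul_gcd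
    (p : ℕ) (hp : p.Prime) (hodd : Odd p) (ν l : ℕ) (hν : 1 ≤ ν) (hl : 1 ≤ l)
    (α : ℕ) (hα : α < 2 ^ (ν - 1))
    (hcong : (p : ℤ) ≡ 5 ^ α [ZMOD (2 ^ (ν + 1))] ∨ (p : ℤ) ≡ -5 ^ α [ZMOD (2 ^ (ν + 1))])
    (hne : ¬ 2 ^ (ν + 1) ∣ p ^ l + 1) :
    (2 ^ (ν + 1)).totient =
      2 * orderOf (((p ^ l : ℕ) : ZMod (2 ^ (ν + 1)))) * Nat.gcd (2 ^ (ν - 1)) (α * l) := by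
  set M := 2 ^ (ν + 1) with hM
  set x : ZMod M := ((p ^ l : ℕ) : ZMod M) with hxdef
  set g := Nat.gcd (2 ^ (ν - 1)) (α * l) with hg
  have hgdvd : g ∣ 2 ^ (ν - 1) := Nat.gcd_dvd_left _ _
  have h5 : orderOf (5 : ZMod M) = 2 ^ (ν - 1) := orderOf_five ν hν
  have hno : ∀ i : ℕ, (5 : ZMod M) ^ i ≠ -1 := five_pow_ne_neg_one ν hν
  have hxcast : x = ((p : ZMod M)) ^ l := by rw [hxdef]; push_cast; ring
  have hx1 : x ≠ -1 := by
    intro h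
    apply hne
    rw [← ZMod.natCast_eq_zero_iff]
    push_cast
    rw [← hxcast, h]; ring
  have hMcast : ((M : ℕ) : ℤ) = 2 ^ (ν + 1) := by rw [hM]; push_cast; ring
  have hpM : (p : ZMod M) = (5 : ZMod M) ^ α ∨ (p : ZMod M) = -((5 : ZMod M) ^ α) := by
    rcases hcong with h | h
    · left
      have h' := (ZMod.intCast_eq_intCast_iff (p : ℤ) (5 ^ α) M).mpr (by rw [hMcast]; exact h)
      push_cast at h'
      exact h'
    · right
      have h' := (ZMod.intCast_eq_intCast_iff (p : ℤ) (-5 ^ α) M).mpr (by rw [hMcast]; exact h)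
      push_cast at h'
      exact h'
  have htot : (M : ℕ).totient = 2 ^ ν := by
    rw [hM, Nat.totient_prime_pow Nat.prime_two (by omega)]
    simp
  have harith : orderOf x = 2 ^ (ν - 1) / g → (M : ℕ).totient = 2 * orderOf x * g := by
    intro h
    rw [htot, h, mul_assoc, Nat.div_mul_cancel hgdvd, ← pow_succ']
    congr 1
    omega
  rcases hpM with hpe | hpe
  · have hx : x = (5 : ZMod M) ^ (α * l) := by
      rw [hxcast, hpe, ← pow_mul]
    apply harith
    rcases Nat.eq_zero_or_pos (α * l) with h0 | hpos
    · rw [hx, h0, pow_zero, orderOf_one, hg, h0, Nat.gcd_zero_right,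
        Nat.div_self (by positivity)]
    · rw [hx, orderOf_pow' _ (Nat.pos_iff_ne_zero.mp hpos), h5]
  · have hx : x = (-1 : ZMod M) ^ l * (5 : ZMod M) ^ (α * l) := by
      rw [hxcast, hpe, neg_pow, ← pow_mul]
    rcases Nat.even_or_odd l with hle | hlo
    · rw [hle.neg_one_pow, one_mul] at hx
      apply harith
      rcases Nat.eq_zero_or_pos (α * l) with h0 | hpos
      · rw [hx, h0, pow_zero, orderOf_one, hg, h0, Nat.gcd_zero_right,
          Nat.div_self (by positivity)]
      · rw [hx, orderOf_pow' _ (Nat.pos_iff_ne_zero.mp hpos), h5]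
    · rw [hlo.neg_one_pow] at hx
      set y : ZMod M := (5 : ZMod M) ^ (α * l) with hy
      have hxny : x = -y := by rw [hx]; ring
      have hyne1 : y ≠ 1 := by
        intro h
        exact hx1 (by rw [hxny, h])
      have hαl : α * l ≠ 0 := by
        intro h
        exact hyne1 (by rw [hy, h, pow_zero])
      have hd : orderOf y = 2 ^ (ν - 1) / g := by
        rw [hy, orderOf_pow' _ hαl, h5]
      have hddvd : orderOf y ∣ 2 ^ (ν - 1) := by
        rw [hd]
        exact Nat.div_dvd_of_dvd hgdvd
      have hdne1 : orderOf y ≠ 1 := fun h => hyne1 (orderOf_eq_one_iff.mp h)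
      have hdeven : Even (orderOf y) := by
        obtain ⟨s, hs, hseq⟩ := (Nat.dvd_prime_pow Nat.prime_two).mp hddvd
        rcases Nat.eq_zero_or_pos s with rfl | hspos
        · exact absurd (by rw [hseq, pow_zero]) hdne1
        · rw [hseq]
          exact (Nat.even_pow.mpr ⟨even_two, by omega⟩)
      have hxd : x ^ orderOf y = 1 := by
        rw [hxny, hdeven.neg_pow, pow_orderOf_eq_one]
      have hedvd : orderOf x ∣ orderOf y := orderOf_dvd_of_pow_eq_one hxd
      have heq : orderOf x = orderOf y := by
        rcases Nat.even_or_odd (orderOf x) with he | ho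
        · refine Nat.dvd_antisymm hedvd (orderOf_dvd_of_pow_eq_one ?_)
          rw [← he.neg_pow y, ← hxny]
          exact pow_orderOf_eq_one x
        · exfalso
          have h1 : (-y) ^ orderOf x = 1 := by
            rw [← hxny]; exact pow_orderOf_eq_one x
          rw [ho.neg_pow] at h1
          have h2 : y ^ orderOf x = -1 := by
            rw [← neg_neg (y ^ orderOf x), h1]
          rw [hy, ← pow_mul] at h2
          exact hno _ h2
      apply harith
      rw [heq, hd]
end
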